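/- Let {0} = L_0 ⊂ L_1 ⊂ ⋯ ⊂ L_m = L be a (q, γ)-filtration of a full-rank lattice L ⊆ ℝⁿ with γ ≥ 2, let 1/γ ≤ α < 1, and for 1 ≤ j ≤ m let E_{j,α}(x) = Σ_{i=j}^m α^{i−j}·π_i(x), where π_i is the orthogonal projection onto span(L_i) ∩ span(L_{i−1})^⊥. Then: (1) μ(L_j) ≤ q·λ₁(E_{j,α}(L)) for all 1 ≤ j ≤ m, and (2) λ₁(E_{j+1,α}(L)) ≥ γ·λ₁(E_{j,α}(L)) for all 1 ≤ j < m. -/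

import Mathlib

/-!
Write `V i` for the real span of `L_i` and `π_i` for the orthogonal projection onto
`V i ⊓ (V (i - 1))ᗮ`, so that `E_j = π_j + α • E_{j+1}` with orthogonal summands. On `V j` the map
`E_j` is the projection onto `(V (j - 1))ᗮ`, hence `E_j(L_j) = L_j / L_{j-1}`. Conversely, for
`x ∈ L` either `E_{j+1} x = 0`, and then `x ∈ L ∩ V j = L_j`, or by downward induction on `j`
`‖E_j x‖ ≥ α ‖E_{j+1} x‖ ≥ α λ₁(L_{j+1} / L_j) ≥ α γ λ₁(L_j / L_{j-1}) ≥ λ₁(L_j / L_{j-1})`. So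
`λ₁(E_j(L)) = λ₁(L_j / L_{j-1})`, which is (2). For (1), lifting a near point of the quotient
through `L_{j-1} ⊂ L_j` gives `μ(L_j) ≤ μ(L_{j-1}) + μ(L_j / L_{j-1})`, and the
`λ₁(L_i / L_{i-1})` at least double at each step, so
`μ(L_j) ≤ (q / 2) ∑_{i ≤ j} λ₁(L_i / L_{i-1}) ≤ q λ₁(L_j / L_{j-1})`.
-/

open Metric Submodule
noncomputable section

/-- The length of a shortest nonzero vector of a set `A`. -/
def lambda1 {E : Type*} [NormedAddCommGroup E] (A : Set E) : ℝ :=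
  sInf (norm '' (A \ {0}))

/-- The covering radius of a lattice (given as a set): the supremum, over points `x` in the
real span of `A`, of the distance from `x` to `A`. -/
def covRad {E : Type*} [NormedAddCommGroup E] [NormedSpace ℝ E] (A : Set E) : ℝ :=
  sSup ((fun x => Metric.infDist x A) '' ((Submodule.span ℝ A : Submodule ℝ E) : Set E))

/-- The image of the set `A` under the orthogonal projection onto the orthogonal complement
of the real span of `S`. -/
def projPerp {n : ℕ} (S A : Set (EuclideanSpace ℝ (Fin n))) : Set (EuclideanSpace ℝ (Fin n)) :=
  (fun x => ((orthogonalProjection (Submodule.span ℝ S)ᗮ) x : EuclideanSpace ℝ (Fin n))) '' A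

/-- The quotient lattice `L_j / L_{j−1}`: the orthogonal projection of `L_j` onto the
orthogonal complement of the span of `L_{j−1}`. -/
def quotLat {n : ℕ} (Ls : ℕ → Submodule ℤ (EuclideanSpace ℝ (Fin n))) (j : ℕ) :
    Set (EuclideanSpace ℝ (Fin n)) :=
  projPerp (Ls (j - 1) : Set (EuclideanSpace ℝ (Fin n)))
    (Ls j : Set (EuclideanSpace ℝ (Fin n)))

/-- `Ls 0 ⊂ Ls 1 ⊂ ⋯ ⊂ Ls m` is a chain of primitive sublattices of `L` from `{0}` to `L`. -/
def IsPrimitiveChain {n : ℕ} (L : Submodule ℤ (EuclideanSpace ℝ (Fin n))) (m : ℕ)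
    (Ls : ℕ → Submodule ℤ (EuclideanSpace ℝ (Fin n))) : Prop :=
  Ls 0 = ⊥ ∧ Ls m = L ∧ (∀ j, j < m → Ls j < Ls (j + 1)) ∧
    ∀ j, j ≤ m → (Ls j : Set (EuclideanSpace ℝ (Fin n)))
      = (L : Set (EuclideanSpace ℝ (Fin n)))
        ∩ (Submodule.span ℝ (Ls j : Set (EuclideanSpace ℝ (Fin n))) :
            Submodule ℝ (EuclideanSpace ℝ (Fin n)))

/-- A `(q, γ)`-filtration of `L`: a chain of primitive sublattices such that
`μ(L_j/L_{j−1}) ≤ q·λ₁(L_j/L_{j−1})/2` and `λ₁(L_{j+1}/L_j) ≥ γ·λ₁(L_j/L_{j−1})`. -/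
def IsQGFiltration {n : ℕ} (L : Submodule ℤ (EuclideanSpace ℝ (Fin n))) (m : ℕ)
    (Ls : ℕ → Submodule ℤ (EuclideanSpace ℝ (Fin n))) (q γ : ℝ) : Prop :=
  IsPrimitiveChain L m Ls ∧
  (∀ j, 1 ≤ j → j ≤ m → covRad (quotLat Ls j) ≤ q * lambda1 (quotLat Ls j) / 2) ∧
  (∀ j, 1 ≤ j → j < m → lambda1 (quotLat Ls (j + 1)) ≥ γ * lambda1 (quotLat Ls j))

/-- The `j`-th "compressed projection" embedding `E_{j,α}(x) = Σ_{i=j}^m α^{i−j}·π_i(x)`,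
where `π_i` is the orthogonal projection onto `span(L_i) ∩ span(L_{i−1})ᗮ`. -/
def filtEmbed {n : ℕ} (Ls : ℕ → Submodule ℤ (EuclideanSpace ℝ (Fin n))) (m : ℕ) (α : ℝ)
    (j : ℕ) (x : EuclideanSpace ℝ (Fin n)) : EuclideanSpace ℝ (Fin n) :=
  ∑ i ∈ Finset.Icc j m, α ^ (i - j) •
    ((orthogonalProjection
        ((Submodule.span ℝ (Ls i : Set (EuclideanSpace ℝ (Fin n)))) ⊓
          (Submodule.span ℝ (Ls (i - 1) : Set (EuclideanSpace ℝ (Fin n))))ᗮ) x :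
      EuclideanSpace ℝ (Fin n)))

open Finset
open scoped RealInnerProductSpace

section Lambda1

variable {E : Type*} [NormedAddCommGroup E] {A : Set E}

lemma lambda1_nonneg (A : Set E) : 0 ≤ lambda1 A :=
  Real.sInf_nonneg (by rintro _ ⟨a, _, rfl⟩; exact norm_nonneg a)

lemma lambda1_le_norm {a : E} (ha : a ∈ A) (ha0 : a ≠ 0) : lambda1 A ≤ ‖a‖ :=
  csInf_le ⟨0, by rintro _ ⟨b, _, rfl⟩; exact norm_nonneg b⟩ ⟨a, ⟨ha, ha0⟩, rfl⟩

lemma le_lambda1 {c : ℝ} (hA : (A \ {0}).Nonempty) (h : ∀ a ∈ A, a ≠ 0 → c ≤ ‖a‖) :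
    c ≤ lambda1 A :=
  le_csInf (hA.image _) (by rintro _ ⟨a, ⟨ha, ha0⟩, rfl⟩; exact h a ha ha0)

end Lambda1

section CovRad

variable {E : Type*} [NormedAddCommGroup E] [NormedSpace ℝ E]

lemma covRad_le {A : Set E} {c : ℝ} (h : ∀ x ∈ span ℝ A, infDist x A ≤ c) : covRad A ≤ c :=
  csSup_le ⟨_, 0, zero_mem _, rfl⟩ (by rintro _ ⟨x, hx, rfl⟩; exact h x hx)

/-- Rounding the coefficients of `x` down to integers gives a point of `M`. -/
lemma infDist_le_sum_norm_of_mem_span {M : Submodule ℤ E} {s : Finset E} (hs : (s : Set E) ⊆ M)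
    {x : E} (hx : x ∈ span ℝ (s : Set E)) : infDist x M ≤ ∑ v ∈ s, ‖v‖ := by
  obtain ⟨c, -, rfl⟩ := mem_span_finset.mp hx
  have hround : ∑ v ∈ s, ⌊c v⌋ • v ∈ M := M.sum_mem fun v hv => M.smul_mem _ (hs hv)
  calc infDist (∑ v ∈ s, c v • v) M
      ≤ ‖∑ v ∈ s, c v • v - ∑ v ∈ s, ⌊c v⌋ • v‖ := by
        rw [← dist_eq_norm]; exact infDist_le_dist_of_mem hround
    _ = ‖∑ v ∈ s, Int.fract (c v) • v‖ := by
        simp only [← sum_sub_distrib, Int.fract, sub_smul, Int.cast_smul_eq_zsmul]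
    _ ≤ ∑ v ∈ s, ‖Int.fract (c v) • v‖ := norm_sum_le _ _
    _ ≤ ∑ v ∈ s, ‖v‖ := sum_le_sum fun v _ => by
        rw [norm_smul, Real.norm_of_nonneg (Int.fract_nonneg _)]
        exact mul_le_of_le_one_left (norm_nonneg v) (Int.fract_lt_one _).le

/-- `covRad` is an `sSup`, so this needs the distances to be bounded: `M` contains the integer
combinations of a finite set spanning `span ℝ M`. -/
lemma infDist_le_covRad [FiniteDimensional ℝ E] {M : Submodule ℤ E} {x : E}
    (hx : x ∈ span ℝ (M : Set E)) : infDist x M ≤ covRad (M : Set E) := by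
  obtain ⟨s, hsM, hs⟩ :=
    (fg_span_iff_fg_span_finset_subset (M : Set E)).mp
      (IsNoetherian.noetherian (span ℝ (M : Set E)))
  refine le_csSup ⟨∑ v ∈ s, ‖v‖, ?_⟩ ⟨x, hx, rfl⟩
  rintro _ ⟨y, hy, rfl⟩
  exact infDist_le_sum_norm_of_mem_span hsM (hs ▸ hy)

end CovRad

section InnerProduct

variable {E : Type*} [NormedAddCommGroup E] [InnerProductSpace ℝ E]

lemma Submodule.starProjection_inf_orthogonal {U V : Submodule ℝ E}
    [U.HasOrthogonalProjection] [V.HasOrthogonalProjection] [(V ⊓ Uᗮ).HasOrthogonalProjection]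
    (hUV : U ≤ V) (x : E) :
    (V ⊓ Uᗮ).starProjection x = V.starProjection x - U.starProjection x := by
  refine eq_starProjection_of_mem_orthogonal ⟨V.sub_mem (V.starProjection_apply_mem x)
    (hUV (U.starProjection_apply_mem x)), ?_⟩ ?_
  · have h := Uᗮ.sub_mem (U.sub_starProjection_mem_orthogonal x)
      (orthogonal_le hUV (V.sub_starProjection_mem_orthogonal x))
    rwa [sub_sub_sub_cancel_left] at h
  · have h : x - (V.starProjection x - U.starProjection x)
        = (x - V.starProjection x) + U.starProjection x := by abel
    rw [h]
    exact add_mem (orthogonal_le inf_le_left (V.sub_starProjection_mem_orthogonal x))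
      (orthogonal_le inf_le_right (U.le_orthogonal_orthogonal (U.starProjection_apply_mem x)))

variable [FiniteDimensional ℝ E]

lemma covRad_le_covRad_add_covRad_image_starProjection {M N : Submodule ℤ E} (hMN : M ≤ N) :
    covRad (N : Set E) ≤
      covRad (M : Set E) + covRad ((span ℝ (M : Set E))ᗮ.starProjection '' N) := by
  set U := span ℝ (M : Set E)
  set Q := N.map ((Uᗮ.starProjection : E →ₗ[ℝ] E).restrictScalars ℤ)
  have hQ : (Q : Set E) = Uᗮ.starProjection '' N := by simp [Q]
  rw [← hQ]
  refine covRad_le fun x hx => le_of_forall_pos_le_add fun ε hε => ?_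
  -- Take `w ∈ N` whose projection is near that of `x`, then `u ∈ M` near the `U`-part of `x - w`.
  have hPx : Uᗮ.starProjection x ∈ span ℝ (Q : Set E) := by
    rw [hQ]; exact (span_image (Uᗮ.starProjection : E →ₗ[ℝ] E)).ge (mem_map_of_mem hx)
  obtain ⟨_, hwQ, hw_near⟩ := (infDist_lt_iff ⟨0, Q.zero_mem⟩).mp
    ((infDist_le_covRad hPx).trans_lt (lt_add_of_pos_right _ (half_pos hε)))
  rw [hQ] at hwQ
  obtain ⟨w, hw, rfl⟩ := hwQ
  obtain ⟨u, hu, hu_near⟩ := (infDist_lt_iff ⟨0, M.zero_mem⟩).mp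
    ((infDist_le_covRad (U.starProjection_apply_mem (x - w))).trans_lt
      (lt_add_of_pos_right _ (half_pos hε)))
  have hsplit : x - (u + w)
      = (U.starProjection (x - w) - u) + (Uᗮ.starProjection x - Uᗮ.starProjection w) := by
    have h := U.starProjection_add_starProjection_orthogonal (x - w)
    rw [map_sub Uᗮ.starProjection] at h
    linear_combination (norm := module) -h
  calc infDist x N ≤ dist x (u + w) := infDist_le_dist_of_mem (N.add_mem (hMN hu) hw)
    _ ≤ dist (U.starProjection (x - w)) u + dist (Uᗮ.starProjection x) (Uᗮ.starProjection w) := by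
        simp only [dist_eq_norm, hsplit]; exact norm_add_le _ _
    _ ≤ covRad (M : Set E) + covRad (Q : Set E) + ε := by linarith

end InnerProduct

section Flag

variable {E : Type*} [NormedAddCommGroup E] [InnerProductSpace ℝ E] [FiniteDimensional ℝ E]

def layer (V : ℕ → Submodule ℝ E) (i : ℕ) : Submodule ℝ E := V i ⊓ (V (i - 1))ᗮ

/-- `filtEmbed Ls` is definitionally `flagEmbed` of the flag `fun i => span ℝ (Ls i)`, so the
lemmas below apply to it directly. -/
def flagEmbed (V : ℕ → Submodule ℝ E) (m : ℕ) (α : ℝ) (j : ℕ) (x : E) : E :=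
  ∑ i ∈ Icc j m, α ^ (i - j) • (layer V i).starProjection x

variable {V : ℕ → Submodule ℝ E} {m : ℕ}

lemma flagEmbed_eq_add (α : ℝ) {j : ℕ} (hj : j ≤ m) (x : E) :
    flagEmbed V m α j x = (layer V j).starProjection x + α • flagEmbed V m α (j + 1) x := by
  rw [flagEmbed, flagEmbed, Icc_eq_cons_Ioc hj, sum_cons, ← Icc_add_one_left_eq_Ioc, smul_sum,
    Nat.sub_self, pow_zero, one_smul]
  refine congrArg _ (sum_congr rfl fun i hi => ?_)
  rw [smul_smul, ← pow_succ', show i - (j + 1) + 1 = i - j by grind]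

variable (hV : MonotoneOn V (Set.Iic m))
include hV

lemma starProjection_layer {i : ℕ} (hi : i ≤ m) (x : E) :
    (layer V i).starProjection x = (V i).starProjection x - (V (i - 1)).starProjection x :=
  starProjection_inf_orthogonal (hV ((Nat.sub_le i 1).trans hi) hi (Nat.sub_le i 1)) x

lemma sum_starProjection_layer {k l : ℕ} (hkl : k ≤ l) (hl : l ≤ m) (x : E) :
    ∑ i ∈ Ioc k l, (layer V i).starProjection x
      = (V l).starProjection x - (V k).starProjection x := by
  induction l, hkl using Nat.le_induction with
  | base => simp
  | succ l hkl ih =>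
    rw [sum_Ioc_succ_top hkl, ih (by omega), starProjection_layer hV hl, Nat.add_sub_cancel]
    abel

lemma starProjection_layer_eq_zero {i j : ℕ} (hji : j < i) (hi : i ≤ m) {x : E} (hx : x ∈ V j) :
    (layer V i).starProjection x = 0 :=
  (starProjection_apply_eq_zero_iff _).mpr <| orthogonal_le inf_le_right <|
    le_orthogonal_orthogonal _ (hV (by omega : j ≤ m) (by omega : i - 1 ≤ m) (by omega) hx)

lemma flagEmbed_succ_mem_orthogonal (α : ℝ) (j : ℕ) (x : E) :
    flagEmbed V m α (j + 1) x ∈ (V j)ᗮ :=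
  sum_mem fun i hi => smul_mem _ _ <| orthogonal_le
    (hV (by grind : j ≤ m) (by grind : i - 1 ≤ m) (by grind))
    (starProjection_apply_mem (layer V i) x).2

lemma mul_norm_flagEmbed_succ_le {α : ℝ} (hα : 0 ≤ α) {j : ℕ} (hj : j ≤ m) (x : E) :
    α * ‖flagEmbed V m α (j + 1) x‖ ≤ ‖flagEmbed V m α j x‖ := by
  have horth : ⟪(layer V j).starProjection x, α • flagEmbed V m α (j + 1) x⟫ = 0 :=
    inner_right_of_mem_orthogonal (starProjection_apply_mem (layer V j) x).1
      (smul_mem _ _ (flagEmbed_succ_mem_orthogonal hV α j x))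
  have h := norm_add_sq_eq_norm_sq_add_norm_sq_real horth
  rw [← flagEmbed_eq_add α hj, norm_smul, Real.norm_of_nonneg hα] at h
  exact nonneg_le_nonneg_of_sq_le_sq (norm_nonneg _) (h ▸ le_add_of_nonneg_left (mul_self_nonneg _))

lemma flagEmbed_of_mem {α : ℝ} {j : ℕ} (hj : j ≤ m) {x : E} (hx : x ∈ V j) :
    flagEmbed V m α j x = (V (j - 1))ᗮ.starProjection x := by
  rw [flagEmbed, sum_eq_single_of_mem j (mem_Icc.mpr ⟨le_rfl, hj⟩) fun i hi hij => by
      rw [starProjection_layer_eq_zero hV (by grind) (mem_Icc.mp hi).2 hx, smul_zero],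
    Nat.sub_self, pow_zero, one_smul, starProjection_layer hV hj, starProjection_orthogonal_val,
    starProjection_eq_self_iff.mpr hx]

lemma mem_of_flagEmbed_succ_eq_zero {α : ℝ} (hα : 0 < α) {j : ℕ} (hj : j ≤ m) {x : E}
    (hx : x ∈ V m) (h : flagEmbed V m α (j + 1) x = 0) : x ∈ V j := by
  have hsq : ∀ i, ⟪(layer V i).starProjection x, x⟫ = ‖(layer V i).starProjection x‖ ^ 2 :=
    fun i => by
      rw [← real_inner_self_eq_norm_sq, ← inner_starProjection_left_eq_right,
        starProjection_eq_self_iff.mpr (starProjection_apply_mem _ x)]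
  -- `⟪E_{j+1} x, x⟫` is a positive combination of the `‖π_i x‖ ^ 2`, `i > j`.
  have hsum : ∑ i ∈ Icc (j + 1) m, α ^ (i - (j + 1)) * ‖(layer V i).starProjection x‖ ^ 2 = 0 := by
    simpa only [flagEmbed, sum_inner, real_inner_smul_left, hsq, inner_zero_left]
      using congrArg (⟪·, x⟫) h
  have hzero : ∀ i ∈ Ioc j m, (layer V i).starProjection x = 0 := fun i hi => by
    rw [← Icc_add_one_left_eq_Ioc] at hi
    simpa [hα.ne'] using (sum_eq_zero_iff_of_nonneg (fun i _ => by positivity)).mp hsum i hi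
  have h := sum_starProjection_layer hV hj le_rfl x
  rwa [sum_eq_zero hzero, starProjection_eq_self_iff.mpr hx, eq_comm, sub_eq_zero, eq_comm,
    starProjection_eq_self_iff] at h

end Flag

lemma sum_Icc_le_two_mul {a : ℕ → ℝ} (ha : ∀ i, 0 ≤ a i) {j : ℕ}
    (hgrow : ∀ i, 1 ≤ i → i < j → 2 * a i ≤ a (i + 1)) :
    ∑ i ∈ Icc 1 j, a i ≤ 2 * a j := by
  induction j with
  | zero => simp [ha 0]
  | succ j ih =>
    have hprev : ∑ i ∈ Icc 1 j, a i ≤ a (j + 1) := by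
      rcases Nat.eq_zero_or_pos j with rfl | hj
      · simp [ha 1]
      · exact (ih fun i h1 hi => hgrow i h1 (by omega)).trans (hgrow j hj (by omega))
    rw [sum_Icc_succ_top (by omega)]
    linarith

section Filtration

variable {n m : ℕ} {L : Submodule ℤ (EuclideanSpace ℝ (Fin n))}
  {Ls : ℕ → Submodule ℤ (EuclideanSpace ℝ (Fin n))}

namespace IsPrimitiveChain

variable (hc : IsPrimitiveChain L m Ls)
include hc

lemma monotoneOn : MonotoneOn Ls (Set.Iic m) :=
  monotoneOn_of_le_succ Set.ordConnected_Iic fun j _ _ hj =>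
    (hc.2.2.1 j (Order.succ_le_iff.mp hj)).le

lemma monotoneOn_span :
    MonotoneOn (fun i => span ℝ (Ls i : Set (EuclideanSpace ℝ (Fin n)))) (Set.Iic m) :=
  fun _ hi _ hj hij => span_mono (hc.monotoneOn hi hj hij)

lemma le {j : ℕ} (hj : j ≤ m) : Ls j ≤ L :=
  hc.2.1 ▸ hc.monotoneOn hj Set.self_mem_Iic hj

lemma mem_of_mem_span {j : ℕ} (hj : j ≤ m) {x : EuclideanSpace ℝ (Fin n)} (hx : x ∈ L)
    (hxj : x ∈ span ℝ (Ls j : Set (EuclideanSpace ℝ (Fin n)))) : x ∈ Ls j := by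
  rw [← SetLike.mem_coe, hc.2.2.2 j hj]
  exact ⟨hx, hxj⟩

lemma image_filtEmbed (α : ℝ) {j : ℕ} (hj : j ≤ m) :
    filtEmbed Ls m α j '' Ls j = quotLat Ls j :=
  Set.image_congr fun _ hx => flagEmbed_of_mem hc.monotoneOn_span hj (subset_span hx)

lemma nonempty_quotLat_diff_zero {j : ℕ} (h1 : 1 ≤ j) (hj : j ≤ m) :
    (quotLat Ls j \ {0}).Nonempty := by
  obtain ⟨w, hw, hw_prev⟩ := SetLike.exists_of_lt (hc.2.2.1 (j - 1) (by omega))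
  rw [Nat.sub_add_cancel h1] at hw
  refine ⟨(span ℝ (Ls (j - 1) : Set (EuclideanSpace ℝ (Fin n))))ᗮ.starProjection w, ⟨w, hw, rfl⟩,
    fun h0 => hw_prev (hc.mem_of_mem_span (by omega) (hc.le hj hw) ?_)⟩
  rwa [Set.mem_singleton_iff, starProjection_apply_eq_zero_iff, orthogonal_orthogonal] at h0

lemma lambda1_quotLat_le_norm_filtEmbed {α γ : ℝ}
    (hgrow : ∀ j, 1 ≤ j → j < m → lambda1 (quotLat Ls (j + 1)) ≥ γ * lambda1 (quotLat Ls j))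
    (hα : 0 < α) (hαγ : 1 ≤ α * γ) {j : ℕ} (h1 : 1 ≤ j) (hj : j ≤ m)
    {x : EuclideanSpace ℝ (Fin n)} (hx : x ∈ L) (hne : filtEmbed Ls m α j x ≠ 0) :
    lambda1 (quotLat Ls j) ≤ ‖filtEmbed Ls m α j x‖ := by
  by_cases h0 : filtEmbed Ls m α (j + 1) x = 0
  · have hxm : x ∈ span ℝ (Ls m : Set (EuclideanSpace ℝ (Fin n))) := hc.2.1 ▸ subset_span hx
    have hxj := hc.mem_of_mem_span hj hx
      (mem_of_flagEmbed_succ_eq_zero hc.monotoneOn_span hα hj hxm h0)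
    refine lambda1_le_norm ?_ hne
    rw [← hc.image_filtEmbed α hj]
    exact ⟨x, hxj, rfl⟩
  · have hjm : j < m := by
      -- otherwise `filtEmbed Ls m α (j + 1)` is an empty sum
      by_contra! hmj
      exact h0 (sum_eq_zero fun i hi => by grind)
    calc lambda1 (quotLat Ls j)
        ≤ α * γ * lambda1 (quotLat Ls j) := le_mul_of_one_le_left (lambda1_nonneg _) hαγ
      _ ≤ α * lambda1 (quotLat Ls (j + 1)) := by
        rw [mul_assoc]; exact mul_le_mul_of_nonneg_left (hgrow j h1 hjm) hα.le
      _ ≤ α * ‖filtEmbed Ls m α (j + 1) x‖ := mul_le_mul_of_nonneg_left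
        (lambda1_quotLat_le_norm_filtEmbed hgrow hα hαγ (by omega) hjm hx h0) hα.le
      _ ≤ ‖filtEmbed Ls m α j x‖ := mul_norm_flagEmbed_succ_le hc.monotoneOn_span hα.le hj x
termination_by m - j

lemma lambda1_image_filtEmbed {α γ : ℝ}
    (hgrow : ∀ j, 1 ≤ j → j < m → lambda1 (quotLat Ls (j + 1)) ≥ γ * lambda1 (quotLat Ls j))
    (hα : 0 < α) (hαγ : 1 ≤ α * γ) {j : ℕ} (h1 : 1 ≤ j) (hj : j ≤ m) :
    lambda1 (filtEmbed Ls m α j '' L) = lambda1 (quotLat Ls j) := by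
  have hsub : quotLat Ls j ⊆ filtEmbed Ls m α j '' L :=
    hc.image_filtEmbed α hj ▸ Set.image_mono (hc.le hj)
  have hne := hc.nonempty_quotLat_diff_zero h1 hj
  refine le_antisymm (le_lambda1 hne fun a ha ha0 => lambda1_le_norm (hsub ha) ha0)
    (le_lambda1 (hne.mono (Set.sdiff_subset_sdiff_left hsub)) ?_)
  rintro _ ⟨x, hx, rfl⟩ hx0
  exact hc.lambda1_quotLat_le_norm_filtEmbed hgrow hα hαγ h1 hj hx hx0

lemma covRad_le_sum_covRad_quotLat {j : ℕ} (hj : j ≤ m) :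
    covRad (Ls j : Set (EuclideanSpace ℝ (Fin n))) ≤ ∑ i ∈ Icc 1 j, covRad (quotLat Ls i) := by
  induction j with
  | zero =>
    rw [hc.1, Icc_eq_empty (by omega), sum_empty]
    exact covRad_le fun x hx => by simp_all
  | succ j ih =>
    rw [sum_Icc_succ_top (by omega)]
    exact (covRad_le_covRad_add_covRad_image_starProjection
      (hc.monotoneOn (by omega : j ≤ m) hj (by omega))).trans
      (by gcongr; exacts [ih (by omega), le_rfl])

end IsPrimitiveChain

end Filtration

theorem covRad_le_and_lambda1_ge_of_filtration_general
    (n : ℕ) (L : Submodule ℤ (EuclideanSpace ℝ (Fin n)))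
    (m : ℕ) (Ls : ℕ → Submodule ℤ (EuclideanSpace ℝ (Fin n))) (q γ : ℝ) (hq : 1 ≤ q) (hγ : 2 ≤ γ)
    (hfil : IsQGFiltration L m Ls q γ) (α : ℝ) (hα0 : 1 / γ ≤ α) :
    (∀ j, 1 ≤ j → j ≤ m →
        covRad (Ls j : Set (EuclideanSpace ℝ (Fin n)))
          ≤ q * lambda1 (filtEmbed Ls m α j '' (L : Set (EuclideanSpace ℝ (Fin n))))) ∧
      (∀ j, 1 ≤ j → j < m →
        lambda1 (filtEmbed Ls m α (j + 1) '' (L : Set (EuclideanSpace ℝ (Fin n))))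
          ≥ γ * lambda1 (filtEmbed Ls m α j '' (L : Set (EuclideanSpace ℝ (Fin n))))) := by
  obtain ⟨hc, hcov, hgrow⟩ := hfil
  have hα : 0 < α := lt_of_lt_of_le (by positivity) hα0
  have hαγ : 1 ≤ α * γ := by rwa [div_le_iff₀ (by positivity)] at hα0
  have hlambda1 := fun j (h1 : 1 ≤ j) (hj : j ≤ m) => hc.lambda1_image_filtEmbed hgrow hα hαγ h1 hj
  refine ⟨fun j h1 hj => ?_, fun j h1 hj => ?_⟩
  · have hsum := sum_Icc_le_two_mul (fun i => lambda1_nonneg (quotLat Ls i)) (j := j)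
      fun i h1 hi => by nlinarith [hgrow i h1 (by omega), lambda1_nonneg (quotLat Ls i)]
    rw [hlambda1 j h1 hj]
    calc covRad (Ls j : Set (EuclideanSpace ℝ (Fin n)))
        ≤ ∑ i ∈ Icc 1 j, covRad (quotLat Ls i) := hc.covRad_le_sum_covRad_quotLat hj
      _ ≤ ∑ i ∈ Icc 1 j, q / 2 * lambda1 (quotLat Ls i) := sum_le_sum fun i hi => by
        linarith [hcov i (mem_Icc.mp hi).1 ((mem_Icc.mp hi).2.trans hj)]
      _ ≤ q / 2 * (2 * lambda1 (quotLat Ls j)) := by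
        rw [← mul_sum]; exact mul_le_mul_of_nonneg_left hsum (by linarith)
      _ = q * lambda1 (quotLat Ls j) := by ring
  · rw [hlambda1 (j + 1) (by omega) hj, hlambda1 j h1 hj.le]
    exact hgrow j h1 hj

/-- For a `(q, γ)`-filtration of `L` with `γ ≥ 2` and `1/γ ≤ α < 1`:
(1) `μ(L_j) ≤ q·λ₁(E_{j,α}(L))` for all `1 ≤ j ≤ m`, and
(2) `λ₁(E_{j+1,α}(L)) ≥ γ·λ₁(E_{j,α}(L))` for all `1 ≤ j < m`. -/
theorem covRad_le_and_lambda1_ge_of_filtration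
    (n : ℕ) (L : Submodule ℤ (EuclideanSpace ℝ (Fin n))) [DiscreteTopology L] (hL : IsZLattice ℝ L)
    (m : ℕ) (Ls : ℕ → Submodule ℤ (EuclideanSpace ℝ (Fin n))) (q γ : ℝ) (hq : 1 ≤ q) (hγ : 2 ≤ γ)
    (hfil : IsQGFiltration L m Ls q γ) (α : ℝ) (hα0 : 1 / γ ≤ α) (hα1 : α < 1) :
    (∀ j, 1 ≤ j → j ≤ m →
        covRad (Ls j : Set (EuclideanSpace ℝ (Fin n)))
          ≤ q * lambda1 (filtEmbed Ls m α j '' (L : Set (EuclideanSpace ℝ (Fin n))))) ∧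
      (∀ j, 1 ≤ j → j < m →
        lambda1 (filtEmbed Ls m α (j + 1) '' (L : Set (EuclideanSpace ℝ (Fin n))))
          ≥ γ * lambda1 (filtEmbed Ls m α j '' (L : Set (EuclideanSpace ℝ (Fin n))))) :=
  covRad_le_and_lambda1_ge_of_filtration_general n L m Ls q γ hq hγ hfil α hα0
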